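/- There exists an algebra of partial functions F that is atomic but admits no complete representation by partial functions and no atomic representation by partial functions. Hence an atomic, representable (∘, ⊓, A)-algebra need not be completely representable. -/

import Mathlib

/-! Algebras of partial functions: basic definitions. -/

namespace PFAlg

variable {X Y : Type*}

/-- `f ⊆ X × X` is a partial function. -/
def IsPF (f : Set (X × X)) : Prop :=
  ∀ ⦃x y z : X⦄, (x, y) ∈ f → (x, z) ∈ f → y = z

/-- Composition of partial functions (binary relations), written left-to-right:
`f ∘ g = {(x,z) : ∃ y, (x,y) ∈ f and (y,z) ∈ g}`. -/
def comp (f g : Set (X × X)) : Set (X × X) :=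
  {p | ∃ y, (p.1, y) ∈ f ∧ (y, p.2) ∈ g}

/-- Antidomain: the diagonal of the set of points where `f` is undefined. -/
def adom (f : Set (X × X)) : Set (X × X) :=
  {p | p.1 = p.2 ∧ ∀ y, (p.1, y) ∉ f}

/-- An algebra of partial functions on the base `X`: a nonempty collection of
partial functions closed under composition, intersection and antidomain. -/
structure IsPFAlgebra (F : Set (Set (X × X))) : Prop where
  nonempty : F.Nonempty
  pf : ∀ f ∈ F, IsPF f
  comp_mem : ∀ f ∈ F, ∀ g ∈ F, comp f g ∈ F
  inter_mem : ∀ f ∈ F, ∀ g ∈ F, f ∩ g ∈ F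
  adom_mem : ∀ f ∈ F, adom f ∈ F

/-- `m` is the supremum of `S` in the poset `(F, ⊆)`. -/
def IsLUBIn (F S : Set (Set (X × X))) (m : Set (X × X)) : Prop :=
  m ∈ F ∧ (∀ s ∈ S, s ⊆ m) ∧ ∀ c ∈ F, (∀ s ∈ S, s ⊆ c) → m ⊆ c

/-- `m` is the infimum of `S` in the poset `(F, ⊆)`. -/
def IsGLBIn (F S : Set (Set (X × X))) (m : Set (X × X)) : Prop :=
  m ∈ F ∧ (∀ s ∈ S, m ⊆ s) ∧ ∀ c ∈ F, (∀ s ∈ S, c ⊆ s) → c ⊆ m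

/-- `b` is an atom of `F`: a minimal element of `F \ {∅}`. -/
def IsAtomOf (F : Set (Set (X × X))) (b : Set (X × X)) : Prop :=
  b ∈ F ∧ b ≠ ∅ ∧ ∀ g ∈ F, g ≠ ∅ → g ⊆ b → g = b

/-- `F` is atomic: every nonempty member contains an atom. -/
def Atomic (F : Set (Set (X × X))) : Prop :=
  ∀ f ∈ F, f ≠ ∅ → ∃ b, IsAtomOf F b ∧ b ⊆ f

/-- A representation of `F` by partial functions over the base `Y`. -/
structure IsRep (F : Set (Set (X × X))) (θ : Set (X × X) → Set (Y × Y)) : Prop where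
  injOn : Set.InjOn θ F
  pf : ∀ f ∈ F, IsPF (θ f)
  comp_eq : ∀ f ∈ F, ∀ g ∈ F, θ (comp f g) = comp (θ f) (θ g)
  inter_eq : ∀ f ∈ F, ∀ g ∈ F, θ (f ∩ g) = θ f ∩ θ g
  adom_eq : ∀ f ∈ F, θ (adom f) = adom (θ f)

/-- `θ` is meet complete: it turns existing infima of nonempty subsets into intersections. -/
def MeetComplete (F : Set (Set (X × X))) (θ : Set (X × X) → Set (Y × Y)) : Prop :=
  ∀ S ⊆ F, S.Nonempty → ∀ m, IsGLBIn F S m → θ m = ⋂ s ∈ S, θ s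

/-- `θ` is join complete: it turns existing suprema into unions. -/
def JoinComplete (F : Set (Set (X × X))) (θ : Set (X × X) → Set (Y × Y)) : Prop :=
  ∀ S ⊆ F, ∀ m, IsLUBIn F S m → θ m = ⋃ s ∈ S, θ s

/-- `θ` is an atomic representation. -/
def AtomicRep (F : Set (Set (X × X))) (θ : Set (X × X) → Set (Y × Y)) : Prop :=
  ∀ f ∈ F, ∀ p ∈ θ f, ∃ b, IsAtomOf F b ∧ p ∈ θ b

/-- Composition in `F` is completely left-distributive over joins. -/
def CompLeftDistribJoins (F : Set (Set (X × X))) : Prop :=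
  ∀ a ∈ F, ∀ S ⊆ F, ∀ m, IsLUBIn F S m → IsLUBIn F ((fun s => comp a s) '' S) (comp a m)

/-- Composition in `F` is completely left-distributive over meets. -/
def CompLeftDistribMeets (F : Set (Set (X × X))) : Prop :=
  ∀ a ∈ F, ∀ S ⊆ F, S.Nonempty → ∀ m, IsGLBIn F S m →
    IsGLBIn F ((fun s => comp a s) '' S) (comp a m)

end PFAlg


/-! The algebra lives on `ℕ ∪ {∞}` (`Option ℕ`, with `none` as `∞`): the partial identities `diag S`
for `S` a finite subset of `ℕ` or a cofinite set containing `∞`, together with the single arrow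
`a = {(0, ∞)}`. Its atoms are `a` and the `diag {n}`, whose join is `diag univ`. As
`a ∘ diag univ = a ≠ ∅`, any representation `θ` has `(x, y) ∈ θ a` and `(y, z) ∈ θ (diag univ)`.
But `a ∘ diag {n} = ∅`, so `(y, z)` lies in no `θ (diag {n})`: `θ` does not send the join
`diag univ` to the union, and no atom accounts for `(y, z)` (an atom whose image meets
`θ (diag univ)` lies below `diag univ`, hence is some `diag {n}`). -/

namespace PFAlg

variable {X Y : Type*}

@[simp]
lemma inter_adom_self (f : Set (X × X)) : f ∩ adom f = ∅ :=
  Set.eq_empty_of_forall_notMem fun p ⟨hf, _, h⟩ => h p.2 hf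

lemma IsPFAlgebra.empty_mem {F : Set (Set (X × X))} (hF : IsPFAlgebra F) : ∅ ∈ F := by
  obtain ⟨f, hf⟩ := hF.nonempty
  simpa using hF.inter_mem f hf _ (hF.adom_mem f hf)

namespace IsRep

variable {F : Set (Set (X × X))} {θ : Set (X × X) → Set (Y × Y)}

lemma map_empty (hF : IsPFAlgebra F) (hθ : IsRep F θ) : θ ∅ = ∅ := by
  obtain ⟨f, hf⟩ := hF.nonempty
  rw [← inter_adom_self f, hθ.inter_eq f hf _ (hF.adom_mem f hf), hθ.adom_eq f hf,
    inter_adom_self]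

lemma map_ne_empty (hF : IsPFAlgebra F) (hθ : IsRep F θ) {f : Set (X × X)} (hf : f ∈ F)
    (hf0 : f ≠ ∅) : θ f ≠ ∅ := fun h =>
  hf0 (hθ.injOn hf hF.empty_mem (h.trans (hθ.map_empty hF).symm))

lemma notMem_of_comp_eq_empty (hF : IsPFAlgebra F) (hθ : IsRep F θ) {a b : Set (X × X)}
    (ha : a ∈ F) (hb : b ∈ F) (hab : comp a b = ∅) {x y z : Y} (hxy : (x, y) ∈ θ a) :
    (y, z) ∉ θ b := fun hyz => by
  have hxz : (x, z) ∈ θ (comp a b) := hθ.comp_eq a ha b hb ▸ ⟨y, hxy, hyz⟩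
  rwa [hab, hθ.map_empty hF] at hxz

lemma exists_of_comp_eq_self (hF : IsPFAlgebra F) (hθ : IsRep F θ) {a m : Set (X × X)}
    (ha : a ∈ F) (hm : m ∈ F) (ha0 : a ≠ ∅) (ham : comp a m = a) :
    ∃ x y z : Y, (x, y) ∈ θ a ∧ (y, z) ∈ θ m := by
  obtain ⟨⟨x, z⟩, hxz⟩ := Set.nonempty_iff_ne_empty.mpr (hθ.map_ne_empty hF ha ha0)
  rw [← ham, hθ.comp_eq a ha m hm] at hxz
  obtain ⟨y, hxy, hyz⟩ := hxz
  exact ⟨x, y, z, hxy, hyz⟩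

lemma subset_of_isAtomOf (hF : IsPFAlgebra F) (hθ : IsRep F θ) {b m : Set (X × X)}
    (hb : IsAtomOf F b) (hm : m ∈ F) {p : Y × Y} (hpb : p ∈ θ b) (hpm : p ∈ θ m) : b ⊆ m := by
  have hbm : b ∩ m ≠ ∅ := fun h => by
    have hp : p ∈ θ (b ∩ m) := by
      rw [hθ.inter_eq b hb.1 m hm]
      exact ⟨hpb, hpm⟩
    rwa [h, hθ.map_empty hF] at hp
  rw [← hb.2.2 _ (hF.inter_mem b hb.1 m hm) hbm Set.inter_subset_left]
  exact Set.inter_subset_right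

theorem not_joinComplete (hF : IsPFAlgebra F) (hθ : IsRep F θ) {a m : Set (X × X)}
    {S : Set (Set (X × X))} (ha : a ∈ F) (ha0 : a ≠ ∅) (hS : S ⊆ F) (hm : IsLUBIn F S m)
    (ham : comp a m = a) (haS : ∀ s ∈ S, comp a s = ∅) : ¬ JoinComplete F θ := by
  intro hJ
  obtain ⟨x, y, z, hxy, hyz⟩ := hθ.exists_of_comp_eq_self hF ha hm.1 ha0 ham
  rw [hJ S hS m hm, Set.mem_iUnion₂] at hyz
  obtain ⟨s, hs, hyz⟩ := hyz
  exact hθ.notMem_of_comp_eq_empty hF ha (hS hs) (haS s hs) hxy hyz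

theorem not_atomicRep (hF : IsPFAlgebra F) (hθ : IsRep F θ) {a m : Set (X × X)} (ha : a ∈ F)
    (hm : m ∈ F) (ha0 : a ≠ ∅) (ham : comp a m = a)
    (hatoms : ∀ b, IsAtomOf F b → b ⊆ m → comp a b = ∅) : ¬ AtomicRep F θ := by
  intro hA
  obtain ⟨x, y, z, hxy, hyz⟩ := hθ.exists_of_comp_eq_self hF ha hm ha0 ham
  obtain ⟨b, hb, hyzb⟩ := hA m hm _ hyz
  have hbm : b ⊆ m := hθ.subset_of_isAtomOf hF hb hm hyzb hyz
  exact hθ.notMem_of_comp_eq_empty hF ha hb.1 (hatoms b hb hbm) hxy hyzb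

end IsRep

section Relations

variable {α : Type*}

def diag (S : Set α) : Set (α × α) := {p | p.1 = p.2 ∧ p.1 ∈ S}

@[simp]
lemma mem_diag {S : Set α} {x y : α} : (x, y) ∈ diag S ↔ x = y ∧ x ∈ S := Iff.rfl

@[simp]
lemma diag_subset_diag_iff {S T : Set α} : diag S ⊆ diag T ↔ S ⊆ T := by
  refine ⟨fun h x hx => (h (show (x, x) ∈ diag S from ⟨rfl, hx⟩)).2, ?_⟩
  rintro h ⟨x, y⟩ ⟨hxy, hx⟩
  exact ⟨hxy, h hx⟩

lemma diag_injective : Function.Injective (diag : Set α → Set (α × α)) := fun _ _ h =>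
  (diag_subset_diag_iff.mp h.le).antisymm (diag_subset_diag_iff.mp h.ge)

@[simp]
lemma diag_empty : diag (∅ : Set α) = ∅ := by
  ext ⟨x, y⟩
  simp

lemma diag_ne_empty_iff {S : Set α} : diag S ≠ ∅ ↔ S.Nonempty :=
  (diag_injective.ne_iff' diag_empty).trans Set.nonempty_iff_ne_empty.symm

lemma isPF_diag (S : Set α) : IsPF (diag S) := fun _ _ _ h h' => h.1.symm.trans h'.1

lemma isPF_singleton (u v : α) : IsPF ({(u, v)} : Set (α × α)) := by
  rintro x y z h h'
  simp only [Set.mem_singleton_iff, Prod.mk.injEq] at h h'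
  rw [h.2, h'.2]

lemma comp_diag_diag (S T : Set α) : comp (diag S) (diag T) = diag (S ∩ T) := by
  ext ⟨x, z⟩
  simp only [comp, mem_diag, ↓existsAndEq, true_and, Set.mem_ofPred_eq, Set.mem_inter_iff]
  tauto

lemma diag_inter_diag (S T : Set α) : diag S ∩ diag T = diag (S ∩ T) := by
  ext ⟨x, z⟩
  simp only [Set.mem_inter_iff, mem_diag]
  tauto

lemma adom_diag (S : Set α) : adom (diag S) = diag Sᶜ := by
  ext ⟨x, z⟩
  simp [adom]

lemma comp_singleton_diag (u v : α) (S : Set α) [Decidable (v ∈ S)] :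
    comp {(u, v)} (diag S) = if v ∈ S then {(u, v)} else ∅ := by
  ext ⟨x, z⟩
  split_ifs <;> aesop (add norm unfold comp)

lemma comp_diag_singleton (u v : α) (S : Set α) [Decidable (u ∈ S)] :
    comp (diag S) {(u, v)} = if u ∈ S then {(u, v)} else ∅ := by
  ext ⟨x, z⟩
  split_ifs <;> aesop (add norm unfold comp)

lemma comp_singleton_self {u v : α} (huv : u ≠ v) : comp {(u, v)} {(u, v)} = ∅ := by
  ext ⟨x, z⟩
  aesop (add norm unfold comp)

lemma singleton_inter_diag {u v : α} (huv : u ≠ v) (S : Set α) : {(u, v)} ∩ diag S = ∅ := by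
  ext ⟨x, z⟩
  aesop

lemma adom_singleton (u v : α) : adom {(u, v)} = diag {u}ᶜ := by
  ext ⟨x, z⟩
  simp [adom]

end Relations

end PFAlg

namespace PFAlg.Counterexample

def domains : Set (Set (Option ℕ)) := {S | S.Finite ∧ none ∉ S ∨ Sᶜ.Finite ∧ none ∈ S}

def arrow : Set (Option ℕ × Option ℕ) := {(some 0, none)}

def algebra : Set (Set (Option ℕ × Option ℕ)) := insert arrow (diag '' domains)

lemma empty_mem_domains : ∅ ∈ domains := Or.inl ⟨Set.finite_empty, id⟩

lemma singleton_mem_domains (n : ℕ) : {some n} ∈ domains :=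
  Or.inl ⟨Set.finite_singleton _, by simp⟩

lemma univ_mem_domains : Set.univ ∈ domains := Or.inr ⟨by simp, trivial⟩

lemma compl_mem_domains {S : Set (Option ℕ)} (hS : S ∈ domains) : Sᶜ ∈ domains := by
  rcases hS with ⟨hfin, hnone⟩ | ⟨hfin, hnone⟩
  · exact Or.inr ⟨by rwa [compl_compl], hnone⟩
  · exact Or.inl ⟨hfin, not_not.mpr hnone⟩

lemma inter_mem_domains {S T : Set (Option ℕ)} (hS : S ∈ domains) (hT : T ∈ domains) :
    S ∩ T ∈ domains := by
  rcases hS with ⟨hSfin, hS⟩ | ⟨hSfin, hS⟩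
  · exact Or.inl ⟨hSfin.inter_of_left T, fun h => hS h.1⟩
  rcases hT with ⟨hTfin, hT⟩ | ⟨hTfin, hT⟩
  · exact Or.inl ⟨hTfin.inter_of_right S, fun h => hT h.2⟩
  · exact Or.inr ⟨by rw [Set.compl_inter]; exact hSfin.union hTfin, hS, hT⟩

lemma exists_some_mem_of_mem_domains {S : Set (Option ℕ)} (hS : S ∈ domains)
    (hne : S.Nonempty) : ∃ n : ℕ, some n ∈ S := by
  have : (S \ {none}).Nonempty := by
    rcases hS with ⟨-, hnone⟩ | ⟨hfin, -⟩
    · rwa [Set.sdiff_singleton_eq_self hnone]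
    · simpa only [compl_compl] using
        (hfin.infinite_compl.sdiff (Set.finite_singleton none)).nonempty
  obtain ⟨x, hxS, hx⟩ := this
  obtain ⟨n, rfl⟩ := Option.ne_none_iff_exists'.mp hx
  exact ⟨n, hxS⟩

lemma eq_univ_of_forall_some_mem {S : Set (Option ℕ)} (hS : S ∈ domains)
    (h : ∀ n : ℕ, some n ∈ S) : S = Set.univ := by
  rcases hS with ⟨hfin, -⟩ | ⟨-, hnone⟩
  · exact absurd (hfin.subset (Set.range_subset_iff.mpr h))
      (Set.infinite_range_of_injective (Option.some_injective ℕ))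
  · exact Set.eq_univ_of_forall fun x => x.rec hnone h

lemma arrow_mem : arrow ∈ algebra := Set.mem_insert _ _

lemma diag_mem {S : Set (Option ℕ)} (hS : S ∈ domains) : diag S ∈ algebra :=
  Set.mem_insert_of_mem _ ⟨S, hS, rfl⟩

lemma empty_mem : ∅ ∈ algebra := diag_empty (α := Option ℕ) ▸ diag_mem empty_mem_domains

lemma arrow_ne_empty : arrow ≠ ∅ := Set.singleton_ne_empty _

lemma arrow_not_subset_diag (S : Set (Option ℕ)) : ¬ arrow ⊆ diag S := fun h =>
  Option.some_ne_none 0 (h rfl).1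

lemma isPFAlgebra_algebra : IsPFAlgebra algebra where
  nonempty := ⟨arrow, arrow_mem⟩
  pf := by
    rintro f (rfl | ⟨S, -, rfl⟩)
    · exact isPF_singleton _ _
    · exact isPF_diag S
  comp_mem := by
    classical
    rintro f (rfl | ⟨S, hS, rfl⟩) g (rfl | ⟨T, hT, rfl⟩)
    · rw [arrow, comp_singleton_self (Option.some_ne_none 0)]
      exact empty_mem
    · rw [arrow, comp_singleton_diag]
      split_ifs
      exacts [arrow_mem, empty_mem]
    · rw [arrow, comp_diag_singleton]
      split_ifs
      exacts [arrow_mem, empty_mem]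
    · rw [comp_diag_diag]
      exact diag_mem (inter_mem_domains hS hT)
  inter_mem := by
    rintro f (rfl | ⟨S, hS, rfl⟩) g (rfl | ⟨T, hT, rfl⟩)
    · rw [Set.inter_self]
      exact arrow_mem
    · rw [arrow, singleton_inter_diag (Option.some_ne_none 0)]
      exact empty_mem
    · rw [Set.inter_comm, arrow, singleton_inter_diag (Option.some_ne_none 0)]
      exact empty_mem
    · rw [diag_inter_diag]
      exact diag_mem (inter_mem_domains hS hT)
  adom_mem := by
    rintro f (rfl | ⟨S, hS, rfl⟩)
    · rw [arrow, adom_singleton]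
      exact diag_mem (compl_mem_domains (singleton_mem_domains 0))
    · rw [adom_diag]
      exact diag_mem (compl_mem_domains hS)

lemma isAtomOf_arrow : IsAtomOf algebra arrow := by
  refine ⟨arrow_mem, arrow_ne_empty, ?_⟩
  rintro g (rfl | ⟨T, -, rfl⟩) hg0 hg
  · rfl
  · obtain ⟨x, hx⟩ := diag_ne_empty_iff.mp hg0
    have hxx : (x, x) ∈ arrow := hg ⟨rfl, hx⟩
    simp only [arrow, Set.mem_singleton_iff, Prod.mk.injEq] at hxx
    exact (Option.some_ne_none 0 (hxx.1.symm.trans hxx.2)).elim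

lemma isAtomOf_diag_some (n : ℕ) : IsAtomOf algebra (diag {some n}) := by
  refine ⟨diag_mem (singleton_mem_domains n), diag_ne_empty_iff.mpr (Set.singleton_nonempty _), ?_⟩
  rintro g (rfl | ⟨T, -, rfl⟩) hg0 hg
  · exact absurd hg (arrow_not_subset_diag _)
  · rw [(diag_ne_empty_iff.mp hg0).subset_singleton_iff.mp (diag_subset_diag_iff.mp hg)]

lemma isAtomOf_iff {b : Set (Option ℕ × Option ℕ)} :
    IsAtomOf algebra b ↔ b = arrow ∨ ∃ n : ℕ, b = diag {some n} := by
  refine ⟨?_, ?_⟩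
  · rintro ⟨rfl | ⟨S, hS, rfl⟩, hb0, hmin⟩
    · exact Or.inl rfl
    obtain ⟨n, hn⟩ := exists_some_mem_of_mem_domains hS (diag_ne_empty_iff.mp hb0)
    exact Or.inr ⟨n, (hmin _ (isAtomOf_diag_some n).1 (isAtomOf_diag_some n).2.1
      (diag_subset_diag_iff.mpr (Set.singleton_subset_iff.mpr hn))).symm⟩
  · rintro (rfl | ⟨n, rfl⟩)
    exacts [isAtomOf_arrow, isAtomOf_diag_some n]

lemma atomic_algebra : Atomic algebra := by
  rintro f (rfl | ⟨S, hS, rfl⟩) hf0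
  · exact ⟨arrow, isAtomOf_arrow, subset_rfl⟩
  · obtain ⟨n, hn⟩ := exists_some_mem_of_mem_domains hS (diag_ne_empty_iff.mp hf0)
    exact ⟨_, isAtomOf_diag_some n, diag_subset_diag_iff.mpr (Set.singleton_subset_iff.mpr hn)⟩

lemma isLUBIn_diag_univ :
    IsLUBIn algebra (Set.range fun n : ℕ => diag {some n}) (diag Set.univ) := by
  refine ⟨diag_mem univ_mem_domains,
    Set.forall_mem_range.mpr fun n => diag_subset_diag_iff.mpr (Set.subset_univ _), ?_⟩
  rintro c (rfl | ⟨T, hT, rfl⟩) hc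
  · have h00 : (some 0, some 0) ∈ arrow := hc _ ⟨0, rfl⟩ ⟨rfl, rfl⟩
    simp [arrow] at h00
  · rw [eq_univ_of_forall_some_mem hT fun n =>
      diag_subset_diag_iff.mp (hc _ ⟨n, rfl⟩) (Set.mem_singleton _)]

lemma comp_arrow_diag_univ : comp arrow (diag Set.univ) = arrow := by
  simp [arrow, comp_singleton_diag]

lemma comp_arrow_diag_some (n : ℕ) : comp arrow (diag {some n}) = ∅ := by
  simp [arrow, comp_singleton_diag]

lemma comp_arrow_eq_empty_of_isAtomOf {b : Set (Option ℕ × Option ℕ)} (hb : IsAtomOf algebra b)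
    (hbm : b ⊆ diag Set.univ) : comp arrow b = ∅ := by
  rcases isAtomOf_iff.mp hb with rfl | ⟨n, rfl⟩
  exacts [absurd hbm (arrow_not_subset_diag _), comp_arrow_diag_some n]

end PFAlg.Counterexample

open PFAlg in
/-- there is an atomic algebra of partial functions `F` which admits no
complete representation by partial functions and no atomic representation by partial
functions (over any base `Y`). -/
theorem stmt11 :
    ∃ (X : Type) (F : Set (Set (X × X))), IsPFAlgebra F ∧ Atomic F ∧
      (∀ (Y : Type v) (θ : Set (X × X) → Set (Y × Y)),
        IsRep F θ → ¬ (MeetComplete F θ ∧ JoinComplete F θ)) ∧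
      (∀ (Y : Type v) (θ : Set (X × X) → Set (Y × Y)),
        IsRep F θ → ¬ AtomicRep F θ) := by
  open Counterexample in
  refine ⟨Option ℕ, algebra, isPFAlgebra_algebra, atomic_algebra, fun Y θ hθ hθc => ?_,
    fun Y θ hθ => ?_⟩
  · exact hθ.not_joinComplete isPFAlgebra_algebra arrow_mem arrow_ne_empty
      (Set.range_subset_iff.mpr fun n => diag_mem (singleton_mem_domains n)) isLUBIn_diag_univ
      comp_arrow_diag_univ (Set.forall_mem_range.mpr comp_arrow_diag_some) hθc.2
  · exact hθ.not_atomicRep isPFAlgebra_algebra arrow_mem (diag_mem univ_mem_domains)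
      arrow_ne_empty comp_arrow_diag_univ fun b => comp_arrow_eq_empty_of_isAtomOf
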